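/- For every integer n ≥ 1 and every θ ∈ (0, π), there exists a constant c₀ = c₀(n, θ) > 0 such that for every λ ∈ ℝⁿ and every ε with 0 < ε < θ: if 𝒫_{n,n}(λ) < θ, then 𝒫_{n,n}(λ₁ + ε, …, λₙ + ε) < θ − c₀ ε. (This is the pointwise/eigenvalue form of the uniform semi-continuity of P under the shift ω ↦ ω + εχ.) -/
import Mathlib


open Real

/-- `arccot x = π/2 - arctan x`, a strictly decreasing bijection from `ℝ` onto `(0, π)`. -/
noncomputable def arccot (x : ℝ) : ℝ := π / 2 - Real.arctan x

/-- `𝒫_{k,n}(λ)`: the maximum over subsets `I ⊆ {1,…,n}` with `|I| = k-1` of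
`∑_{i ∈ I} arccot (λ i)`. -/
noncomputable def Pfun (n k : ℕ) (lam : Fin n → ℝ) : ℝ :=
  sSup {x : ℝ | ∃ s : Finset (Fin n), s.card = k - 1 ∧ x = ∑ i ∈ s, arccot (lam i)}

lemma arccot_pos' (x : ℝ) : 0 < arccot x := by
  unfold arccot; linarith [Real.arctan_lt_pi_div_two x]

lemma arccot_anti {x y : ℝ} (h : x ≤ y) : arccot y ≤ arccot x := by
  unfold arccot
  have := Real.arctan_strictMono.monotone h
  linarith

lemma Pfun_set_finite (n k : ℕ) (lam : Fin n → ℝ) :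
    ({x : ℝ | ∃ s : Finset (Fin n), s.card = k - 1 ∧ x = ∑ i ∈ s, arccot (lam i)}).Finite := by
  apply Set.Finite.subset (Set.finite_range (fun s : Finset (Fin n) => ∑ i ∈ s, arccot (lam i)))
  rintro x ⟨s, -, rfl⟩
  exact ⟨s, rfl⟩

lemma arctan_drop {x ε K : ℝ} (hε : 0 < ε) (hx : -K ≤ x) (hxε : x + ε ≤ K) :
    Real.arctan x + ε / (1 + K ^ 2) ≤ Real.arctan (x + ε) := by
  obtain ⟨ctr, hc, heq⟩ := exists_hasDerivAt_eq_slope Real.arctan (fun t => 1 / (1 + t ^ 2))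
    (by linarith : x < x + ε) Real.continuous_arctan.continuousOn
    (fun t _ => Real.hasDerivAt_arctan t)
  have hc1 : -K ≤ ctr := le_of_lt (lt_of_le_of_lt hx hc.1)
  have hc2 : ctr ≤ K := le_of_lt (lt_of_lt_of_le hc.2 hxε)
  have hsq : ctr ^ 2 ≤ K ^ 2 := sq_le_sq' hc1 hc2
  have h1 : (0:ℝ) < 1 + ctr ^ 2 := by positivity
  have h2 : (0:ℝ) < 1 + K ^ 2 := by positivity
  have hdiv : ε / (1 + K ^ 2) ≤ ε / (1 + ctr ^ 2) :=
    div_le_div_of_nonneg_left hε.le h1 (by linarith)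
  have heq' : Real.arctan (x + ε) - Real.arctan x = ε / (1 + ctr ^ 2) := by
    have hne : (1:ℝ) + ctr ^ 2 ≠ 0 := ne_of_gt h1
    have : (1:ℝ) / (1 + ctr ^ 2) = (Real.arctan (x + ε) - Real.arctan x) / ε := by
      simpa using heq
    field_simp at this ⊢
    linarith
  linarith

theorem P_semicontinuity (n : ℕ) (hn : 1 ≤ n) (θ : ℝ) (hθ0 : 0 < θ) (hθπ : θ < π) :
    ∃ c₀ : ℝ, 0 < c₀ ∧
      ∀ (lam : Fin n → ℝ) (ε : ℝ), 0 < ε → ε < θ →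
        Pfun n n lam < θ → Pfun n n (fun i => lam i + ε) < θ - c₀ * ε := by
  have hn0 : (0:ℝ) < n := by exact_mod_cast Nat.lt_of_lt_of_le Nat.zero_lt_one hn
  obtain ⟨δ, hδdef⟩ : ∃ δ : ℝ, δ = θ / (2 * n) := ⟨_, rfl⟩
  have hδ0 : 0 < δ := by rw [hδdef]; positivity
  have hnδ : (n : ℝ) * δ = θ / 2 := by rw [hδdef]; field_simp
  have hδθ2 : δ ≤ θ / 2 := by
    rw [hδdef]
    rw [div_le_div_iff₀ (by positivity) (by norm_num)]
    have hn1 : (1:ℝ) ≤ n := by exact_mod_cast hn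
    nlinarith [hθ0, hn1]
  have hδπ : δ < π / 2 := lt_of_le_of_lt hδθ2 (by linarith)
  obtain ⟨L, hLdef⟩ : ∃ L : ℝ, L = Real.tan (π / 2 - θ) := ⟨_, rfl⟩
  obtain ⟨M, hMdef⟩ : ∃ M : ℝ, M = Real.tan (π / 2 - δ) := ⟨_, rfl⟩
  have harctanL : Real.arctan L = π / 2 - θ := by
    rw [hLdef]; exact Real.arctan_tan (by linarith) (by linarith)
  have harctanM : Real.arctan M = π / 2 - δ := by
    rw [hMdef]; exact Real.arctan_tan (by linarith) (by linarith)
  obtain ⟨K, hKdef⟩ : ∃ K : ℝ, K = |L| + |M| + θ := ⟨_, rfl⟩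
  obtain ⟨c₁, hc₁def⟩ : ∃ c₁ : ℝ, c₁ = 1 / (1 + K ^ 2) := ⟨_, rfl⟩
  have hc₁0 : 0 < c₁ := by rw [hc₁def]; positivity
  obtain ⟨c, hcdef⟩ : ∃ c : ℝ, c = min c₁ (1 / 2) := ⟨_, rfl⟩
  have hc0 : 0 < c := hcdef ▸ lt_min hc₁0 (by norm_num)
  refine ⟨c / 2, by positivity, ?_⟩
  intro lam ε hε0 hεθ hP
  simp only [Pfun] at hP ⊢
  -- every (n-1)-subset sum of the original is < θ
  have hOrigBdd := (Pfun_set_finite n n lam).bddAbove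
  have hOrig : ∀ s : Finset (Fin n), s.card = n - 1 →
      ∑ i ∈ s, arccot (lam i) < θ := by
    intro s hs
    have hmem : (∑ i ∈ s, arccot (lam i)) ∈
        {x : ℝ | ∃ s : Finset (Fin n), s.card = n - 1 ∧ x = ∑ i ∈ s, arccot (lam i)} :=
      ⟨s, hs, rfl⟩
    exact lt_of_le_of_lt (le_csSup hOrigBdd hmem) hP
  -- the key estimate for each subset of the shifted family
  have key : ∀ s : Finset (Fin n), s.card = n - 1 →
      ∑ i ∈ s, arccot (lam i + ε) ≤ θ - c * ε := by
    intro s hs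
    by_cases hcase : ∃ i ∈ s, δ ≤ arccot (lam i)
    · obtain ⟨i₀, hi₀s, hi₀⟩ := hcase
      have hsum := hOrig s hs
      have hterm_le : arccot (lam i₀) ≤ ∑ i ∈ s, arccot (lam i) :=
        Finset.single_le_sum (fun i _ => (arccot_pos' (lam i)).le) hi₀s
      have h1 : arccot (lam i₀) < θ := lt_of_le_of_lt hterm_le hsum
      -- bounds on lam i₀
      have hLlt : L < lam i₀ := by
        have h2 : Real.arctan L < Real.arctan (lam i₀) := by
          unfold arccot at h1; rw [harctanL]; linarith
        exact Real.arctan_strictMono.lt_iff_lt.mp h2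
      have hMle : lam i₀ ≤ M := by
        have h2 : Real.arctan (lam i₀) ≤ Real.arctan M := by
          unfold arccot at hi₀; rw [harctanM]; linarith
        exact Real.arctan_strictMono.le_iff_le.mp h2
      have habs1 : -K ≤ lam i₀ := by
        have := neg_abs_le L
        have := abs_nonneg M
        rw [hKdef]; linarith
      have habs2 : lam i₀ + ε ≤ K := by
        have := le_abs_self M
        have := abs_nonneg L
        rw [hKdef]; linarith
      have hdrop := arctan_drop hε0 habs1 habs2
      have hdrop' : arccot (lam i₀ + ε) ≤ arccot (lam i₀) - c₁ * ε := by
        unfold arccot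
        rw [hc₁def]

        have : ε / (1 + K ^ 2) = 1 / (1 + K ^ 2) * ε := by ring
        linarith [hdrop, this ▸ hdrop]
      have hrest : ∀ i ∈ s.erase i₀, arccot (lam i + ε) ≤ arccot (lam i) :=
        fun i _ => arccot_anti (by linarith)
      have hrest_sum := Finset.sum_le_sum hrest
      have e1 : ∑ i ∈ s.erase i₀, arccot (lam i + ε) + arccot (lam i₀ + ε)
          = ∑ i ∈ s, arccot (lam i + ε) := Finset.sum_erase_add s _ hi₀s
      have e2 : ∑ i ∈ s.erase i₀, arccot (lam i) + arccot (lam i₀)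
          = ∑ i ∈ s, arccot (lam i) := Finset.sum_erase_add s _ hi₀s
      have hcc₁ : c * ε ≤ c₁ * ε :=
        mul_le_mul_of_nonneg_right (hcdef ▸ min_le_left c₁ (1/2)) hε0.le
      linarith
    · push_neg at hcase
      have hbd : ∀ i ∈ s, arccot (lam i + ε) ≤ δ := fun i hi =>
        le_of_lt (lt_of_le_of_lt (arccot_anti (by linarith)) (hcase i hi))
      have hsum : ∑ i ∈ s, arccot (lam i + ε) ≤ s.card • δ :=
        Finset.sum_le_card_nsmul s _ δ hbd
      have hcard : (s.card : ℝ) ≤ n := by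
        exact_mod_cast Nat.le_trans (le_of_eq hs) (Nat.sub_le n 1)
      have h2 : (s.card : ℝ) * δ ≤ θ / 2 := by
        calc (s.card : ℝ) * δ ≤ (n : ℝ) * δ := by nlinarith
          _ = θ / 2 := hnδ
      have h3 : c * ε ≤ (1/2) * ε :=
        mul_le_mul_of_nonneg_right (hcdef ▸ min_le_right c₁ (1/2)) hε0.le
      rw [nsmul_eq_mul] at hsum
      linarith
  -- conclude
  have hne : ∃ t : Finset (Fin n), t.card = n - 1 := by
    obtain ⟨t, -, ht⟩ := Finset.exists_subset_card_eq (show n - 1 ≤ (Finset.univ : Finset (Fin n)).card by simp [Nat.sub_le])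
    exact ⟨t, ht⟩
  obtain ⟨t, ht⟩ := hne
  have hle : sSup {x : ℝ | ∃ s : Finset (Fin n), s.card = n - 1 ∧
      x = ∑ i ∈ s, arccot (lam i + ε)} ≤ θ - c * ε := by
    have hnonempty : Set.Nonempty {x : ℝ | ∃ s : Finset (Fin n), s.card = n - 1 ∧
        x = ∑ i ∈ s, arccot (lam i + ε)} := ⟨∑ i ∈ t, arccot (lam i + ε), t, ht, rfl⟩
    apply csSup_le hnonempty
    rintro x ⟨s, hsc, rfl⟩
    exact key s hsc
  have : (c / 2) * ε < c * ε := by nlinarith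
  linarith
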